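/- Let w ≥ 1, let p be a prime with p ≥ w, and let q be coprime with p with q ≥ 2w−1. For any two distinct generators g, g' ∈ {1,...,p−1}, the Hamming cross-correlation of the CRT-UI sequences u_g and u_{g'} satisfies H_{g,g'}(τ) ≤ 1 for every relative time offset τ ∈ Z_{pq}. -/

import Mathlib

/-!
If `t₁` and `t₂` both contribute to the cross-correlation at offset `τ`, write
`t_i ≡ u_i g [p]`, `t_i ≡ u_i [q]`, `t_i + τ ≡ v_i g' [p]` and `t_i + τ ≡ v_i [q]` with
`u_i, v_i < w`. Modulo `q` the shift cancels, `v₁ - v₂ ≡ u₁ - u₂`, and since `q ≥ 2w - 1`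
this is an equality of integers. Modulo `p` it then gives `(u₁ - u₂) g ≡ (u₁ - u₂) g'`, and
since `p` is prime with `|u₁ - u₂| < p` and `g ≢ g'`, we get `u₁ = u₂`. Hence `t₁ ≡ t₂`
modulo `p` and modulo `q`, so `t₁ = t₂` by the Chinese remainder theorem.
-/

/-- The CRT-UI sequence of period `p*q` with weight `w` and generator `g`:
`u_g(t) = 1` iff `Φ_{p,q}(t) = (u*g mod p, u mod q)` for some `u ∈ {0,...,w-1}`.
It is modeled as a function `ℕ → ℕ` (indexed modulo `p*q`). -/
def crtUI (p q w g : ℕ) : ℕ → ℕ := fun t =>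
  if ∃ u ∈ Finset.range w, t % p = (u * g) % p ∧ t % q = u % q then 1 else 0

theorem ZMod.eq_of_natCast_sub_mul_eq_sub_mul {p : ℕ} [Fact p.Prime] {a b g g' : ℕ}
    (ha : a < p) (hb : b < p) (hg : g < p) (hg' : g' < p) (hgg' : g ≠ g')
    (h : ((a : ZMod p) - b) * g = ((a : ZMod p) - b) * g') : a = b := by
  rw [← sub_eq_zero, ← mul_sub, mul_eq_zero, sub_eq_zero, sub_eq_zero] at h
  rcases h with hab | hgg
  · exact ((ZMod.natCast_eq_natCast_iff _ _ _).1 hab).eq_of_lt_of_lt ha hb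
  · exact absurd (((ZMod.natCast_eq_natCast_iff _ _ _).1 hgg).eq_of_lt_of_lt hg hg') hgg'

section crtUI

variable {p q w : ℕ}

theorem crtUI_mod_mul (g t : ℕ) : crtUI p q w g (t % (p * q)) = crtUI p q w g t := by
  simp only [crtUI, Nat.mod_mod_of_dvd _ (dvd_mul_right p q),
    Nat.mod_mod_of_dvd _ (dvd_mul_left q p)]

/-- Two coincidences of `u_g` and the `τ`-shift of `u_{g'}` come from the same index of `u_g`. -/
theorem crtUI_index_eq_of_coincidences (hp : p.Prime) (hpw : w ≤ p) (hq : 2 * w - 1 ≤ q)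
    {g g' : ℕ} (hg : g < p) (hg' : g' < p) (hgg' : g ≠ g') {τ t₁ t₂ u₁ u₂ v₁ v₂ : ℕ}
    (hu₁ : u₁ < w) (hu₂ : u₂ < w) (hv₁ : v₁ < w) (hv₂ : v₂ < w)
    (ht₁ : t₁ ≡ u₁ * g [MOD p] ∧ t₁ ≡ u₁ [MOD q])
    (ht₂ : t₂ ≡ u₂ * g [MOD p] ∧ t₂ ≡ u₂ [MOD q])
    (hs₁ : t₁ + τ ≡ v₁ * g' [MOD p] ∧ t₁ + τ ≡ v₁ [MOD q])
    (hs₂ : t₂ + τ ≡ v₂ * g' [MOD p] ∧ t₂ + τ ≡ v₂ [MOD q]) : u₁ = u₂ := by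
  have := Fact.mk hp
  simp only [← ZMod.natCast_eq_natCast_iff, Nat.cast_add, Nat.cast_mul] at ht₁ ht₂ hs₁ hs₂
  have hshift : v₁ + u₂ = v₂ + u₁ := by
    have : ((v₁ + u₂ : ℕ) : ZMod q) = (v₂ + u₁ : ℕ) := by
      push_cast
      linear_combination hs₂.2 - hs₁.2 + ht₁.2 - ht₂.2
    exact ((ZMod.natCast_eq_natCast_iff _ _ _).1 this).eq_of_lt_of_lt (by omega) (by omega)
  have hshift' : ((v₁ : ZMod p) + u₂) = v₂ + u₁ := by
    simpa using congrArg (Nat.cast : ℕ → ZMod p) hshift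
  refine ZMod.eq_of_natCast_sub_mul_eq_sub_mul (by omega) (by omega) hg hg' hgg' ?_
  linear_combination ht₂.1 - ht₁.1 + hs₁.1 - hs₂.1 + (g' : ZMod p) * hshift'

end crtUI

theorem crtUI_crossCorrelation_le_one_general
    (w p q : ℕ) (hp : p.Prime) (hpw : w ≤ p)
    (hpq : Nat.Coprime p q) (hq : 2 * w - 1 ≤ q)
    (g g' : ℕ) (hg2 : g ≤ p - 1)
    (hg'2 : g' ≤ p - 1) (hgg' : g ≠ g') :
    ∀ τ < p * q,
      ∑ t ∈ Finset.range (p * q),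
        crtUI p q w g t * crtUI p q w g' ((t + τ) % (p * q)) ≤ 1 := by
  intro τ _
  simp only [crtUI_mod_mul]
  simp only [crtUI, ite_zero_mul_ite_zero, mul_one, Finset.sum_boole, Nat.cast_id]
  refine Finset.card_le_one.2 fun t₁ ht₁ t₂ ht₂ => ?_
  simp only [Finset.mem_filter, Finset.mem_range] at ht₁ ht₂
  obtain ⟨ht₁pq, ⟨u₁, hu₁, hu₁t⟩, v₁, hv₁, hv₁t⟩ := ht₁
  obtain ⟨ht₂pq, ⟨u₂, hu₂, hu₂t⟩, v₂, hv₂, hv₂t⟩ := ht₂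
  have hu : u₁ = u₂ := crtUI_index_eq_of_coincidences hp hpw hq (by omega) (by omega) hgg'
    hu₁ hu₂ hv₁ hv₂ hu₁t hu₂t hv₁t hv₂t
  subst hu
  have hmodp : t₁ ≡ t₂ [MOD p] := hu₁t.1.trans hu₂t.1.symm
  have hmodq : t₁ ≡ t₂ [MOD q] := hu₁t.2.trans hu₂t.2.symm
  exact ((Nat.modEq_and_modEq_iff_modEq_mul hpq).1 ⟨hmodp, hmodq⟩).eq_of_lt_of_lt ht₁pq ht₂pq

/-- for distinct generators `g, g' ∈ {1,...,p-1}`, the Hamming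
cross-correlation of the CRT-UI sequences `u_g` and `u_{g'}` is at most `1` at every
relative time offset `τ ∈ Z_{pq}`. -/
theorem crtUI_crossCorrelation_le_one
    (w p q : ℕ) (hw : 1 ≤ w) (hp : p.Prime) (hpw : w ≤ p)
    (hpq : Nat.Coprime p q) (hq : 2 * w - 1 ≤ q)
    (g g' : ℕ) (hg1 : 1 ≤ g) (hg2 : g ≤ p - 1)
    (hg'1 : 1 ≤ g') (hg'2 : g' ≤ p - 1) (hgg' : g ≠ g') :
    ∀ τ < p * q,
      ∑ t ∈ Finset.range (p * q),
        crtUI p q w g t * crtUI p q w g' ((t + τ) % (p * q)) ≤ 1 :=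
  crtUI_crossCorrelation_le_one_general w p q hp hpw hpq hq g g' hg2 hg'2 hgg'
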